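/- For every integer q > 1, every integer Δ > 2, and every integer k ≥ 0, the problem Convergence(k,q) restricted to graphs of maximum degree at most Δ admits a proof-labeling scheme with certificates of size at most Δ·((Δ−1)^{k+1} − 1) · q^{Δ+1} · ⌈log₂ q⌉ · ⌈log₂ id_max⌉ bits, on graphs whose identifiers are assigned injectively from [id_max]. -/

import Mathlib

/-!
A certificate lists, for every node `u` within distance `k`, an upper bound on its distance and
its local function, compressed to the states of its closed neighbourhood. A node checks its own
entry, that every entry of a neighbour at distance `< k` reappears in its own list at distance
one larger, and that some dynamics agreeing with its list is stationary at it after `k` steps.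
By induction on the distance, accepted certificates describe the true local functions on the
whole ball of radius `k`, and these determine the state of the node after `k + 1` steps. The
Moore bound on the size of that ball yields the certificate size.
-/

/-- The closed neighborhood of a vertex. -/
def closedNbhd {V : Type*} (G : SimpleGraph V) (v : V) : Set V :=
  insert v (G.neighborSet v)

/-- `F` is a finite-state dynamics over `G`: the new state of each node depends only
on the current states of its closed neighborhood (equivalently, local functions
`f_v : Q^{N[v]} → Q` with `F(x)_v = f_v(x|_{N[v]})` exist). -/
def IsFSD {V Q : Type*} (G : SimpleGraph V) (F : (V → Q) → V → Q) : Prop :=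
  ∀ (v : V) (x y : V → Q), (∀ w ∈ closedNbhd G v, x w = y w) → F x v = F y v

/-- Every configuration reaches a fixed point after at most `k` time-steps. -/
def ConvergesIn {V Q : Type*} (F : (V → Q) → V → Q) (k : ℕ) : Prop :=
  ∀ x : V → Q, F (F^[k] x) = F^[k] x

/-- A proof-labeling scheme (verifier) for finite-state dynamics on `n`-node graphs
with state set `Q`.  The one-round verifier at a node outputs accept/reject as a
function of the node's identifier, its incident edges, its local function, its own
certificate and the certificates of its neighbors only; this is enforced by the
`locality` condition. -/
structure PLS (n : ℕ) (Q : Type*) where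
  verify : SimpleGraph (Fin n) → ((Fin n → Q) → Fin n → Q) →
      (Fin n → ℕ) → (Fin n → List Bool) → Fin n → Bool
  locality : ∀ G G' F F' ids ids' cert cert' (v : Fin n),
      (∀ w, G.Adj v w ↔ G'.Adj v w) →
      ids v = ids' v →
      (∀ w, G.Adj v w → ids w = ids' w) →
      (∀ x, F x v = F' x v) →
      cert v = cert' v →
      (∀ w, G.Adj v w → cert w = cert' w) →
      verify G F ids cert v = verify G' F' ids' cert' v

/-- Correctness of a PLS `π` for the language `L` on the instance domain `Dom`,
with certificates of (possibly instance-dependent) size `size` and identifiers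
assigned injectively from `[idMax] = {1,…,idMax}`: on yes-instances some certificate
assignment of the prescribed size makes every node accept (completeness), and on
no-instances every certificate assignment of the prescribed size is rejected at some
node (soundness). -/
def PLS.Correct {n : ℕ} {Q : Type*} (π : PLS n Q)
    (Dom L : SimpleGraph (Fin n) → ((Fin n → Q) → Fin n → Q) → Prop)
    (size : SimpleGraph (Fin n) → ((Fin n → Q) → Fin n → Q) → ℕ)
    (idMax : ℕ) : Prop :=
  ∀ G F, G.Connected → IsFSD G F → Dom G F →
    ∀ ids : Fin n → ℕ, Function.Injective ids → (∀ v, 1 ≤ ids v ∧ ids v ≤ idMax) →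
      ((L G F → ∃ cert : Fin n → List Bool,
          (∀ v, (cert v).length ≤ size G F) ∧ ∀ v, π.verify G F ids cert v = true) ∧
       (¬ L G F → ∀ cert : Fin n → List Bool,
          (∀ v, (cert v).length ≤ size G F) → ∃ v, π.verify G F ids cert v = false))

/-- `b_v(p)`: the number of edges of `G` with an endpoint at distance at most `p`
from `v`. -/
noncomputable def bv {n : ℕ} (G : SimpleGraph (Fin n)) (v : Fin n) (p : ℕ) : ℕ :=
  {e ∈ G.edgeSet | ∃ u, u ∈ e ∧ G.dist v u ≤ p}.ncard

open Finset

lemma Finset.exists_fin_range_eq {V : Type*} {s : Finset V} (hne : s.Nonempty) {m : ℕ}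
    (hm : #s ≤ m) : ∃ f : Fin m → V, Set.range f = s := by
  obtain ⟨e⟩ : Nonempty (s ↪ Fin m) := Function.Embedding.nonempty_of_card_le (by simpa)
  have : Nonempty s := hne.coe_sort
  refine ⟨Subtype.val ∘ Function.invFun e, ?_⟩
  rw [Set.range_comp, (Function.invFun_surjective e.injective).range_eq, Set.image_univ,
    Subtype.range_coe]

/-- The Moore bound for maximum degree `Δ` and radius `k`. -/
def mooreBound (Δ k : ℕ) : ℕ := 1 + Δ * ∑ i ∈ range k, (Δ - 1) ^ i

lemma two_mul_mooreBound_le {Δ : ℕ} (hΔ : 2 < Δ) (k : ℕ) :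
    2 * mooreBound Δ k ≤ Δ * ((Δ - 1) ^ (k + 1) - 1) := by
  obtain ⟨d, rfl⟩ : ∃ d, Δ = d + 3 := ⟨Δ - 3, by omega⟩
  have hgeom := geom_sum_mul_add (d + 1) k
  simp only [mooreBound, show d + 3 - 1 = d + 1 + 1 by omega] at hgeom ⊢
  set S := ∑ i ∈ range k, (d + 1 + 1) ^ i
  have hS : 2 * S ≤ S * (d + 1) * (d + 2) := by
    rw [mul_assoc, mul_comm 2]
    exact Nat.mul_le_mul_left S (by nlinarith)
  rw [pow_succ, ← hgeom, show (S * (d + 1) + 1) * (d + 1 + 1) - 1 = S * (d + 1) * (d + 2) + d + 1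
    by ring_nf; omega]
  nlinarith

namespace SimpleGraph

variable {V : Type*} {G : SimpleGraph V}

lemma Connected.dist_le_dist_add_one_of_adj (hG : G.Connected) {v w : V} (h : G.Adj v w)
    (u : V) : G.dist u w ≤ G.dist u v + 1 := by
  have := hG.dist_triangle (u := u) (v := v) (w := w)
  rwa [dist_eq_one_iff_adj.mpr h] at this

lemma Connected.exists_adj_of_dist_eq_add_one (hG : G.Connected) {v x : V} {r : ℕ}
    (h : G.dist v x = r + 1) : ∃ y, G.Adj y x ∧ G.dist v y = r := by
  obtain ⟨p, hp⟩ := hG.exists_walk_length_eq_dist x v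
  rw [dist_comm, h] at hp
  cases p with
  | nil => simp at hp
  | @cons _ y _ hxy q =>
    refine ⟨y, hxy.symm, le_antisymm ?_ ?_⟩
    · simpa [dist_comm, show q.length = r by simpa using hp] using dist_le q
    · have := hG.dist_le_dist_add_one_of_adj hxy.symm v
      omega

lemma Connected.dist_lt_card [Fintype V] (hG : G.Connected) (u v : V) :
    G.dist u v < Fintype.card V := by
  obtain ⟨p, hp, hlen⟩ := hG.exists_path_of_dist u v
  exact hlen ▸ hp.length_lt

variable [Fintype V] [DecidableRel G.Adj] {Δ : ℕ}

lemma ncard_neighborSet_eq_degree (u : V) : (G.neighborSet u).ncard = G.degree u := by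
  rw [← card_neighborFinset_eq_degree, ← Set.ncard_coe_finset, coe_neighborFinset]

lemma Connected.card_sphere_le (hG : G.Connected) (hdeg : ∀ u, G.degree u ≤ Δ) (v : V) :
    ∀ r, #{u | G.dist v u = r + 1} ≤ Δ * (Δ - 1) ^ r
  | 0 => by
    simpa [← card_neighborFinset_eq_degree, neighborFinset_eq_filter]
      using (card_le_card fun u hu => by simpa using hu).trans (hdeg v)
  | r + 1 => by
    classical
    have hsub : ({u | G.dist v u = r + 2} : Finset V) ⊆
        ({u | G.dist v u = r + 1} : Finset V).biUnion
          fun y => {x ∈ G.neighborFinset y | G.dist v x = r + 2} := by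
      intro x hx
      obtain ⟨y, hyx, hy⟩ := hG.exists_adj_of_dist_eq_add_one (by simpa using hx)
      simp only [mem_biUnion, mem_filter, mem_univ, true_and, mem_neighborFinset] at hx ⊢
      exact ⟨y, hy, hyx, hx⟩
    have hchildren : ∀ y ∈ ({u | G.dist v u = r + 1} : Finset V),
        #{x ∈ G.neighborFinset y | G.dist v x = r + 2} ≤ Δ - 1 := by
      intro y hy
      obtain ⟨z, hzy, hz⟩ := hG.exists_adj_of_dist_eq_add_one (by simpa using hy)
      have hz' : G.dist v z ≠ r + 2 := by omega
      have hlt := card_lt_card ((filter_ssubset (p := fun x => G.dist v x = r + 2)).mpr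
        ⟨z, (mem_neighborFinset _ _ _).mpr hzy.symm, hz'⟩)
      rw [card_neighborFinset_eq_degree] at hlt
      have := hdeg y
      omega
    calc #{u | G.dist v u = r + 2}
        ≤ #{u | G.dist v u = r + 1} * (Δ - 1) :=
          (card_le_card hsub).trans (card_biUnion_le_card_mul _ _ _ hchildren)
      _ ≤ Δ * (Δ - 1) ^ r * (Δ - 1) := by gcongr; exact hG.card_sphere_le hdeg v r
      _ = Δ * (Δ - 1) ^ (r + 1) := by ring

lemma Connected.card_ball_le_mooreBound (hG : G.Connected) (hdeg : ∀ u, G.degree u ≤ Δ)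
    (v : V) : ∀ r, #{u | G.dist v u ≤ r} ≤ mooreBound Δ r
  | 0 => by
    refine (card_le_card fun u hu => ?_).trans (card_singleton v).le
    simpa [hG.dist_eq_zero_iff, eq_comm] using hu
  | r + 1 => by
    classical
    have hsub : ({u | G.dist v u ≤ r + 1} : Finset V) ⊆
        ({u | G.dist v u ≤ r} : Finset V) ∪ ({u | G.dist v u = r + 1} : Finset V) := by
      intro u
      simp only [mem_union, mem_filter, mem_univ, true_and]
      omega
    calc #{u | G.dist v u ≤ r + 1}
        ≤ #{u | G.dist v u ≤ r} + #{u | G.dist v u = r + 1} :=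
          (card_le_card hsub).trans (card_union_le _ _)
      _ ≤ mooreBound Δ r + Δ * (Δ - 1) ^ r :=
          add_le_add (hG.card_ball_le_mooreBound hdeg v r) (hG.card_sphere_le hdeg v r)
      _ = mooreBound Δ (r + 1) := by simp only [mooreBound, sum_range_succ]; ring

end SimpleGraph

section Dynamics

variable {V Q : Type*} {G : SimpleGraph V} {F : (V → Q) → V → Q}

lemma IsFSD.iterate_apply_eq_of_forall_dist_lt (hG : G.Connected) (hF : IsFSD G F)
    {F' : (V → Q) → V → Q} :
    ∀ (j : ℕ) (v : V), (∀ u, G.dist v u < j → ∀ x, F x u = F' x u) →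
      ∀ x, F^[j] x v = F'^[j] x v
  | 0, _, _, _ => rfl
  | j + 1, v, h, x => by
    rw [Function.iterate_succ_apply', Function.iterate_succ_apply', ← h v (by simp)]
    refine hF v _ _ fun w hw =>
      hF.iterate_apply_eq_of_forall_dist_lt hG j w (fun u hu => h u ?_) x
    have : G.dist v u ≤ G.dist w u + 1 := by
      rcases hw with rfl | hvw
      · omega
      · simpa [SimpleGraph.dist_comm] using hG.dist_le_dist_add_one_of_adj hvw.symm u
    omega

/-- A local rule for a node of degree at most `Δ`: its closed neighbourhood listed with
repetitions as `Δ + 1` nodes, and a function of their states. -/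
abbrev LocalRule (V Q : Type*) (Δ : ℕ) := (Fin (Δ + 1) → V) × ((Fin (Δ + 1) → Q) → Q)

def LocalRule.eval {Δ : ℕ} (d : LocalRule V Q Δ) (x : V → Q) : Q := d.2 (x ∘ d.1)

lemma IsFSD.exists_localRule_eval_eq [Fintype V] [DecidableRel G.Adj] {Δ : ℕ} (hF : IsFSD G F)
    {u : V} (hu : G.degree u ≤ Δ) : ∃ d : LocalRule V Q Δ, ∀ x, d.eval x = F x u := by
  classical
  obtain ⟨e, he⟩ := (insert u (G.neighborFinset u)).exists_fin_range_eq (m := Δ + 1)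
    (insert_nonempty _ _) ((card_insert_le _ _).trans (by simpa using hu))
  refine ⟨(e, fun t => F (t ∘ Function.invFun e) u), fun x => hF u _ _ fun w hw => ?_⟩
  have hwe : w ∈ Set.range e := by
    rw [he]
    simpa [closedNbhd] using hw
  simp [Function.invFun_eq hwe]

end Dynamics

open Classical in
noncomputable def bitCode (α : Type*) (s : ℕ) (a : α) : List Bool :=
  if h : Nonempty (α ↪ (Fin s → Bool)) then List.ofFn (h.some a) else []

lemma length_bitCode_le (α : Type*) (s : ℕ) (a : α) : (bitCode α s a).length ≤ s := by
  unfold bitCode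
  split <;> simp

lemma bitCode_injective {α : Type*} [Finite α] {s : ℕ} (h : Nat.card α ≤ 2 ^ s) :
    Function.Injective (bitCode α s) := by
  have : Fintype α := Fintype.ofFinite α
  have hemb : Nonempty (α ↪ (Fin s → Bool)) :=
    Function.Embedding.nonempty_of_card_le (by simpa [Nat.card_eq_fintype_card] using h)
  intro a b hab
  simp only [bitCode, dif_pos hemb] at hab
  exact hemb.some.injective (List.ofFn_injective hab)

namespace ConvergencePLS

variable (n : ℕ) (Q : Type*) (Δ k : ℕ)

/-- An entry `(u, r, d)` claims that `u` lies within distance `r` and has local rule `d`. -/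
abbrev Entry := Fin n × Fin n × LocalRule (Fin n) Q Δ

/-- Certificates list the entries of the nodes within distance `k`, with repetitions. -/
abbrev Content := Fin (mooreBound Δ k) → Entry n Q Δ

variable {n Q Δ k}

def HasOwnEntry (v : Fin n) (f : (Fin n → Q) → Q) (φ : Content n Q Δ k) : Prop :=
  ∃ r d, (v, r, d) ∈ Set.range φ ∧ (r : ℕ) = 0 ∧ ∀ x, d.eval x = f x

def Inherits (φ ψ : Content n Q Δ k) : Prop :=
  ∀ u r d, (u, r, d) ∈ Set.range ψ → (r : ℕ) < k →
    ∃ r' : Fin n, (u, r', d) ∈ Set.range φ ∧ (r' : ℕ) ≤ r + 1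

def WitnessesConvergence (v : Fin n) (φ : Content n Q Δ k) : Prop :=
  ∃ F' : (Fin n → Q) → Fin n → Q,
    (∀ u r d, (u, r, d) ∈ Set.range φ → ∀ x, d.eval x = F' x u) ∧
      ∀ x, F' (F'^[k] x) v = F'^[k] x v

variable (Δ k) in
def Accepts (s : ℕ) (v : Fin n) (f : (Fin n → Q) → Q) (own : List Bool)
    (nbrs : Set (List Bool)) : Prop :=
  ∃ φ : Content n Q Δ k, bitCode _ s φ = own ∧ HasOwnEntry v f φ ∧
    (∀ c ∈ nbrs, ∀ ψ, bitCode _ s ψ = c → Inherits φ ψ) ∧ WitnessesConvergence v φ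

variable (n Q Δ k) in
/-- On at most one node the verifier sees the whole dynamics and needs no certificate. -/
noncomputable def scheme (s : ℕ) : PLS n Q where
  verify G F _ cert v := open Classical in
    if n ≤ 1 then decide (ConvergesIn F k)
    else decide (Accepts Δ k s v (fun x => F x v) (cert v) (cert '' G.neighborSet v))
  locality G G' F F' _ _ cert cert' v hadj _ _ hF hcert hnbr := by
    split_ifs with hn
    · have : Subsingleton (Fin n) := Fin.subsingleton_iff_le_one.mpr hn
      obtain rfl : F = F' := funext₂ fun x u => Subsingleton.elim v u ▸ hF x
      rfl
    · have hf : (fun x => F x v) = fun x => F' x v := funext hF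
      have himg : cert '' G.neighborSet v = cert' '' G'.neighborSet v := by
        rw [show G.neighborSet v = G'.neighborSet v from Set.ext hadj]
        exact Set.image_congr fun w hw => hnbr w ((hadj w).mpr hw)
      rw [hf, hcert, himg]

variable {G : SimpleGraph (Fin n)} {F : (Fin n → Q) → Fin n → Q}
  {φ : Fin n → Content n Q Δ k}

lemma exists_entry_of_dist_eq (hG : G.Connected)
    (hown : ∀ v, HasOwnEntry v (fun x => F x v) (φ v))
    (hinh : ∀ v w, G.Adj v w → Inherits (φ v) (φ w)) :
    ∀ ρ v u, G.dist v u = ρ → ρ ≤ k →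
      ∃ r d, (u, r, d) ∈ Set.range (φ v) ∧ (r : ℕ) ≤ ρ ∧ ∀ x, d.eval x = F x u
  | 0, v, u, h, _ => by
    obtain rfl : v = u := hG.dist_eq_zero_iff.mp h
    obtain ⟨r, d, hmem, hr, hd⟩ := hown v
    exact ⟨r, d, hmem, hr.le, hd⟩
  | ρ + 1, v, u, h, hk => by
    obtain ⟨y, hyv, hy⟩ :=
      hG.exists_adj_of_dist_eq_add_one (by rwa [SimpleGraph.dist_comm] at h)
    obtain ⟨r, d, hmem, hr, hd⟩ :=
      exists_entry_of_dist_eq hG hown hinh ρ y u (by rwa [SimpleGraph.dist_comm]) (by omega)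
    obtain ⟨r', hmem', hr'⟩ := hinh v y hyv.symm u r d hmem (by omega)
    exact ⟨r', d, hmem', by omega, hd⟩

lemma convergesIn_of_locally_valid (hG : G.Connected) (hF : IsFSD G F)
    (hown : ∀ v, HasOwnEntry v (fun x => F x v) (φ v))
    (hinh : ∀ v w, G.Adj v w → Inherits (φ v) (φ w))
    (hwit : ∀ v, WitnessesConvergence v (φ v)) : ConvergesIn F k := by
  intro x
  funext v
  obtain ⟨F', hF', hconv⟩ := hwit v
  have hagree : ∀ u, G.dist v u < k + 1 → ∀ y, F y u = F' y u := by
    intro u hu y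
    obtain ⟨r, d, hmem, -, hd⟩ := exists_entry_of_dist_eq hG hown hinh _ v u rfl (by omega)
    rw [← hd, hF' u r d hmem]
  have hk1 := hF.iterate_apply_eq_of_forall_dist_lt hG (k + 1) v hagree x
  have hk := hF.iterate_apply_eq_of_forall_dist_lt hG k v (fun u hu => hagree u (by omega)) x
  rw [Function.iterate_succ_apply'] at hk1
  rw [hk1, Function.iterate_succ_apply', hconv, hk]

lemma exists_truthful_contents [DecidableRel G.Adj] (hG : G.Connected) (hF : IsFSD G F)
    (hdeg : ∀ u, G.degree u ≤ Δ) :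
    ∃ φ : Fin n → Content n Q Δ k, (∀ v, HasOwnEntry v (fun x => F x v) (φ v)) ∧
      (∀ v w, G.Adj v w → Inherits (φ v) (φ w)) ∧
      ∀ v u r d, (u, r, d) ∈ Set.range (φ v) → ∀ x, d.eval x = F x u := by
  choose rule hrule using fun u => hF.exists_localRule_eval_eq (Q := Q) (hdeg u)
  choose e he using fun v => Finset.exists_fin_range_eq ⟨v, by simp⟩
    (hG.card_ball_le_mooreBound hdeg v k)
  let entry (v u : Fin n) : Entry n Q Δ :=
    (u, ⟨G.dist v u, by simpa using hG.dist_lt_card v u⟩, rule u)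
  have hmem : ∀ v u r d, (u, r, d) ∈ Set.range (entry v ∘ e v) ↔
      G.dist v u ≤ k ∧ (r : ℕ) = G.dist v u ∧ d = rule u := by
    intro v u r d
    rw [Set.range_comp, he v]
    simp only [coe_filter, mem_univ, true_and, Set.mem_image, entry, Prod.mk.injEq]
    constructor
    · rintro ⟨u, hu, rfl, rfl, rfl⟩
      exact ⟨hu, rfl, rfl⟩
    · rintro ⟨hu, hr, rfl⟩
      exact ⟨u, hu, rfl, Fin.ext hr.symm, rfl⟩
  refine ⟨fun v => entry v ∘ e v, fun v => ?_, fun v w hvw u r d hu hr => ?_, ?_⟩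
  · exact ⟨(entry v v).2.1, rule v, (hmem v v _ _).mpr ⟨by simp, rfl, rfl⟩, by simp [entry],
      hrule v⟩
  · obtain ⟨-, hr', rfl⟩ := (hmem w u r d).mp hu
    have hvu := hG.dist_le_dist_add_one_of_adj hvw.symm u
    simp only [SimpleGraph.dist_comm (u := u)] at hvu
    exact ⟨(entry v u).2.1, (hmem v u _ _).mpr ⟨by omega, rfl, rfl⟩,
      by simp only [entry]; omega⟩
  · rintro v u r d hu x
    obtain ⟨-, -, rfl⟩ := (hmem v u r d).mp hu
    exact hrule u x

theorem scheme_correct [Finite Q] {s : ℕ} (hs : 1 < n → Nat.card (Content n Q Δ k) ≤ 2 ^ s)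
    (idMax : ℕ) :
    (scheme n Q Δ k s).Correct (fun G _ => ∀ v, (G.neighborSet v).ncard ≤ Δ)
      (fun _ F => ConvergesIn F k) (fun _ _ => s) idMax := by
  classical
  intro G F hG hF hdeg ids _ _
  by_cases hn : n ≤ 1
  · have hverify : ∀ cert v,
        (scheme n Q Δ k s).verify G F ids cert v = decide (ConvergesIn F k) := fun _ _ => if_pos hn
    refine ⟨fun hconv => ⟨fun _ => [], by simp, fun v => by simpa [hverify] using hconv⟩,
      fun hconv cert _ => ?_⟩
    obtain ⟨v⟩ := hG.nonempty
    exact ⟨v, by simpa [hverify] using hconv⟩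
  have hverify : ∀ cert v, (scheme n Q Δ k s).verify G F ids cert v = true ↔
      Accepts Δ k s v (fun x => F x v) (cert v) (cert '' G.neighborSet v) := by
    intro cert v
    change (if n ≤ 1 then _ else _) = true ↔ _
    rw [if_neg hn, decide_eq_true_iff]
  constructor
  · intro hconv
    have hdeg' : ∀ u, G.degree u ≤ Δ := fun u => by
      rw [← G.ncard_neighborSet_eq_degree]
      exact hdeg u
    obtain ⟨φ, hown, hinh, htrue⟩ := exists_truthful_contents (k := k) hG hF hdeg'
    refine ⟨fun v => bitCode _ s (φ v), fun v => length_bitCode_le _ _ _, fun v =>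
      (hverify _ v).mpr ⟨φ v, rfl, hown v, ?_, F, htrue v, fun x => congrFun (hconv x) v⟩⟩
    rintro _ ⟨w, hw, rfl⟩ ψ hψ
    rw [bitCode_injective (hs (by omega)) hψ]
    exact hinh v w hw
  · intro hconv cert _
    by_contra! hall
    choose φ hcode hown hinh hwit using fun v => (hverify cert v).mp (by simpa using hall v)
    exact hconv (convergesIn_of_locally_valid hG hF hown
      (fun v w hvw => hinh v _ ⟨w, hvw, rfl⟩ _ (hcode w)) hwit)

lemma natCard_content_le {q idMax : ℕ} (hq : 1 < q) (hΔ : 2 < Δ) (hn : 1 < n)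
    (hid : n ≤ idMax) :
    Nat.card (Content n (Fin q) Δ k) ≤
      2 ^ (Δ * ((Δ - 1) ^ (k + 1) - 1) * q ^ (Δ + 1) * Nat.clog 2 q * Nat.clog 2 idMax) := by
  set Lq := Nat.clog 2 q
  set Li := Nat.clog 2 idMax
  have hLq : 1 ≤ Lq := Nat.clog_pos one_lt_two hq
  have hLi : 1 ≤ Li := Nat.clog_pos one_lt_two (by omega)
  have hentry : n ^ (Δ + 3) * q ^ q ^ (Δ + 1) ≤ 2 ^ (Li * (Δ + 3) + Lq * q ^ (Δ + 1)) := by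
    calc n ^ (Δ + 3) * q ^ q ^ (Δ + 1) ≤ (2 ^ Li) ^ (Δ + 3) * (2 ^ Lq) ^ q ^ (Δ + 1) := by
          gcongr
          · exact hid.trans (Nat.le_pow_clog one_lt_two _)
          · exact Nat.le_pow_clog one_lt_two _
      _ = 2 ^ (Li * (Δ + 3) + Lq * q ^ (Δ + 1)) := by rw [← pow_mul, ← pow_mul, ← pow_add]
  have hΔq : Δ + 3 ≤ q ^ (Δ + 1) :=
    calc Δ + 3 ≤ 2 ^ (Δ + 1) := by rw [pow_succ]; have := Nat.lt_two_pow_self (n := Δ); omega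
      _ ≤ q ^ (Δ + 1) := by gcongr; omega
  have hbits : (Li * (Δ + 3) + Lq * q ^ (Δ + 1)) * mooreBound Δ k ≤
      Δ * ((Δ - 1) ^ (k + 1) - 1) * q ^ (Δ + 1) * Lq * Li :=
    calc (Li * (Δ + 3) + Lq * q ^ (Δ + 1)) * mooreBound Δ k
        ≤ (q ^ (Δ + 1) * Lq * Li + q ^ (Δ + 1) * Lq * Li) * mooreBound Δ k := by
          refine Nat.mul_le_mul_right _ (add_le_add ?_ ?_)
          · calc Li * (Δ + 3) ≤ Li * (q ^ (Δ + 1) * Lq) :=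
                  Nat.mul_le_mul_left _ (hΔq.trans (Nat.le_mul_of_pos_right _ hLq))
              _ = q ^ (Δ + 1) * Lq * Li := by ring
          · calc Lq * q ^ (Δ + 1) ≤ Lq * q ^ (Δ + 1) * Li := Nat.le_mul_of_pos_right _ hLi
              _ = q ^ (Δ + 1) * Lq * Li := by ring
      _ = q ^ (Δ + 1) * Lq * Li * (2 * mooreBound Δ k) := by ring
      _ ≤ q ^ (Δ + 1) * Lq * Li * (Δ * ((Δ - 1) ^ (k + 1) - 1)) :=
          Nat.mul_le_mul_left _ (two_mul_mooreBound_le hΔ k)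
      _ = Δ * ((Δ - 1) ^ (k + 1) - 1) * q ^ (Δ + 1) * Lq * Li := by ring
  calc Nat.card (Content n (Fin q) Δ k)
      = (n ^ (Δ + 3) * q ^ q ^ (Δ + 1)) ^ mooreBound Δ k := by
        simp only [Nat.card_eq_fintype_card, Fintype.card_pi, Fintype.card_prod, Fintype.card_fin,
          prod_const, card_univ]
        ring
    _ ≤ (2 ^ (Li * (Δ + 3) + Lq * q ^ (Δ + 1))) ^ mooreBound Δ k := by gcongr
    _ ≤ _ := by rw [← pow_mul]; exact Nat.pow_le_pow_right two_pos hbits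

end ConvergencePLS

theorem statement_2 (q Δ k n idMax : ℕ) (hq : 1 < q) (hΔ : 2 < Δ) (hid : n ≤ idMax) :
    ∃ π : PLS n (Fin q),
      π.Correct
        (fun G _ => ∀ v, (G.neighborSet v).ncard ≤ Δ)
        (fun _ F => ConvergesIn F k)
        (fun _ _ => Δ * ((Δ - 1) ^ (k + 1) - 1) * q ^ (Δ + 1) *
          Nat.clog 2 q * Nat.clog 2 idMax)
        idMax :=
  ⟨_, ConvergencePLS.scheme_correct
    (fun hn => ConvergencePLS.natCard_content_le hq hΔ hn hid) idMax⟩
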